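/- arXiv:2201.09194 — 2 statements merged into one kernel-verified Lean document; each statement's English description precedes it below -/
import Mathlib

section
/- (Identifiability of equal-variance linear Gaussian DAGs as a special case of Proposition 1.) Take b_j(θ) = θ²/2 and c_j(t) = exp(−t²/2)/√(2π) for all j, so that exp L(x; β) is the joint density on ℝ^p of the linear structural equation model X_j = β_{0j} + Σ_{i : β_{ij} ≠ 0} β_{ij} X_i + ε_j with independent ε_j ~ N(0,1). If β, β̃ ∈ Ω are two parameters such that exp L(x; β) = exp L(x; β̃) for every x ∈ ℝ^p, then G(β) = G(β̃), i.e., for all i, j ∈ {1,…,p}, β_{ij} ≠ 0 if and only if β̃_{ij} ≠ 0. -/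
/-!
Identifiability of equal-variance linear Gaussian DAGs, as the special case
`b_j(θ) = θ²/2`, `c_j(t) = exp(−t²/2)/√(2π)` of Proposition 1.
-/

noncomputable section
open Finset

namespace GLDAG

variable {p : ℕ}

/-- `x̄ = (1, x¹, …, xᵖ) ∈ ℝ^{p+1}`. -/
def xbar (x : Fin p → ℝ) : Fin (p + 1) → ℝ := Fin.cases 1 x

/-- `β_jᵀ x̄`, the linear predictor of node `j`. -/
def colDot (β : Matrix (Fin (p + 1)) (Fin p) ℝ) (j : Fin p) (x : Fin p → ℝ) : ℝ :=
  ∑ i, β i j * xbar x i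

/-- `i ≺_σ j` : `i` precedes `j` in the order given by the permutation `σ`. -/
def prec (σ : Equiv.Perm (Fin p)) (i j : Fin p) : Prop := σ.symm i < σ.symm j

/-- `D(σ)`: parameters whose nonzero pattern is compatible with the permutation `σ`. -/
def Dperm (σ : Equiv.Perm (Fin p)) : Set (Matrix (Fin (p + 1)) (Fin p) ℝ) :=
  {β | ∀ i j : Fin p, ¬ prec σ i j → β i.succ j = 0}

/-- `Ω = ⋃_σ D(σ)`, the set of DAG-compatible parameters. -/
def Omega (p : ℕ) : Set (Matrix (Fin (p + 1)) (Fin p) ℝ) :=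
  ⋃ σ : Equiv.Perm (Fin p), Dperm σ

/-- The continuous GLDAG log-density
`L(x; β) = Σ_j [ log c_j(x^j) + x^j (β_jᵀ x̄) − b_j(β_jᵀ x̄) ]`. -/
def logDensity (b c : Fin p → ℝ → ℝ) (β : Matrix (Fin (p + 1)) (Fin p) ℝ)
    (x : Fin p → ℝ) : ℝ :=
  ∑ j, (Real.log (c j (x j)) + x j * colDot β j x - b j (colDot β j x))

/-- The Gaussian log-partition function `b(θ) = θ²/2`. -/
def gaussB : ℝ → ℝ := fun θ => θ ^ 2 / 2

/-- The standard Gaussian base density `c(t) = exp(−t²/2)/√(2π)`. -/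
def gaussC : ℝ → ℝ := fun t => Real.exp (-t ^ 2 / 2) / Real.sqrt (2 * Real.pi)

end GLDAG

open GLDAG


theorem gram_unique_aux : ∀ (N : ℕ) (n : Type) [Fintype n] [DecidableEq n],
    Fintype.card n ≤ N →
    ∀ (A B : Matrix n n ℝ) (ρ ρ' : n → ℕ),
    (∀ i, A i i = 1) → (∀ i, B i i = 1) →
    (∀ i j, A i j ≠ 0 → i = j ∨ ρ j < ρ i) →
    (∀ i j, B i j ≠ 0 → i = j ∨ ρ' j < ρ' i) →
    (∀ i j, ∑ l, A l i * A l j = ∑ l, B l i * B l j) → A = B := by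
  intro N
  induction N with
  | zero =>
    intro n _ _ hcard A B ρ ρ' _ _ _ _ _
    have : IsEmpty n := Fintype.card_eq_zero_iff.mp (Nat.le_zero.mp hcard)
    funext i j
    exact (this.false i).elim
  | succ N ih =>
    intro n _ _ hcard A B ρ ρ' hA1 hB1 hA hB hgram
    rcases isEmpty_or_nonempty n with he | hne
    · funext i j; exact (he.false i).elim
    -- pick k maximizing ρ
    obtain ⟨k, -, hk⟩ := Finset.exists_max_image (univ : Finset n) ρ univ_nonempty
    have hk' : ∀ j, ρ j ≤ ρ k := fun j => hk j (mem_univ j)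
    -- k is a sink for A
    have hAsink : ∀ j, j ≠ k → A j k = 0 := by
      intro j hj
      by_contra h
      rcases hA j k h with h1 | h1
      · exact hj h1
      · exact absurd (hk' j) (not_le.mpr h1)
    -- Θ k k = 1 for A
    have hAkk : ∑ l, A l k * A l k = 1 := by
      rw [Finset.sum_eq_single_of_mem k (mem_univ k)
        (fun b _ hb => by rw [hAsink b hb, zero_mul]), hA1 k, mul_one]
    -- k is a sink for B too
    have hBer : ∑ l ∈ univ.erase k, B l k * B l k = 0 := by
      have h2 : ∑ l ∈ univ.erase k, B l k * B l k + B k k * B k k = ∑ l, B l k * B l k :=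
        Finset.sum_erase_add _ _ (mem_univ k)
      have h3 := hgram k k
      rw [hAkk] at h3
      rw [← h3] at h2
      rw [hB1 k] at h2
      linarith
    have hBsink : ∀ j, j ≠ k → B j k = 0 := by
      intro j hj
      have := (Finset.sum_eq_zero_iff_of_nonneg
        (fun l _ => mul_self_nonneg (B l k))).mp hBer j (by simp [hj])
      exact mul_self_eq_zero.mp this
    -- row k agrees
    have hrow : ∀ i, A k i = B k i := by
      intro i
      have h1 : ∑ l, A l k * A l i = A k i := by
        rw [Finset.sum_eq_single_of_mem k (mem_univ k)
          (fun b _ hb => by rw [hAsink b hb, zero_mul]), hA1 k, one_mul]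
      have h2 : ∑ l, B l k * B l i = B k i := by
        rw [Finset.sum_eq_single_of_mem k (mem_univ k)
          (fun b _ hb => by rw [hBsink b hb, zero_mul]), hB1 k, one_mul]
      rw [← h1, hgram k i, h2]
    -- restrict to subtype
    set m := {i : n // i ≠ k} with hm
    have hcard' : Fintype.card m ≤ N := by
      have h1 : Fintype.card m = Fintype.card n - Fintype.card {i : n // i = k} :=
        Fintype.card_subtype_compl _
      have h2 : Fintype.card {i : n // i = k} = 1 := Fintype.card_subtype_eq k
      have h3 : 1 ≤ Fintype.card n := Fintype.card_pos
      omega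
    have hsub : ∀ (f : n → ℝ), ∑ l : m, f l.1 = ∑ l ∈ univ.erase k, f l := by
      intro f
      exact (Finset.sum_subtype (univ.erase k) (fun x => by simp) f).symm
    have key : (fun (i j : m) => A i.1 j.1) = (fun (i j : m) => B i.1 j.1) := by
      apply ih m hcard' _ _ (fun i => ρ i.1) (fun i => ρ' i.1)
        (fun i => hA1 i.1) (fun i => hB1 i.1)
      · intro i j h
        rcases hA i.1 j.1 h with h1 | h1
        · exact Or.inl (Subtype.ext h1)
        · exact Or.inr h1
      · intro i j h
        rcases hB i.1 j.1 h with h1 | h1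
        · exact Or.inl (Subtype.ext h1)
        · exact Or.inr h1
      · intro i j
        rw [hsub (fun l => A l i.1 * A l j.1), hsub (fun l => B l i.1 * B l j.1)]
        have e1 : ∑ l ∈ univ.erase k, A l i.1 * A l j.1 + A k i.1 * A k j.1
            = ∑ l, A l i.1 * A l j.1 := Finset.sum_erase_add _ _ (mem_univ k)
        have e2 : ∑ l ∈ univ.erase k, B l i.1 * B l j.1 + B k i.1 * B k j.1
            = ∑ l, B l i.1 * B l j.1 := Finset.sum_erase_add _ _ (mem_univ k)
        have e3 := hgram i.1 j.1
        have e4 := hrow i.1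
        have e5 := hrow j.1
        rw [e4, e5] at e1
        linarith
    funext i j
    by_cases hi : i = k
    · subst hi; exact hrow j
    · by_cases hj : j = k
      · subst hj; rw [hAsink i hi, hBsink i hi]
      · exact congrFun (congrFun key ⟨i, hi⟩) ⟨j, hj⟩

section MainAux
variable {p : ℕ}

lemma colDot_eq (β : Matrix (Fin (p + 1)) (Fin p) ℝ) (j : Fin p) (x : Fin p → ℝ) :
    colDot β j x = β 0 j + ∑ i : Fin p, β i.succ j * x i := by
  unfold colDot
  rw [Fin.sum_univ_succ]
  simp [xbar]

/-- The structural matrix `A(β) j l = δ_{jl} − β_{l,j}`. -/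
def strA (β : Matrix (Fin (p + 1)) (Fin p) ℝ) : Matrix (Fin p) (Fin p) ℝ :=
  fun j l => (if j = l then 1 else 0) - β l.succ j

lemma resid_eq (β : Matrix (Fin (p + 1)) (Fin p) ℝ) (j : Fin p) (x : Fin p → ℝ) :
    x j - colDot β j x = (∑ l, strA β j l * x l) - β 0 j := by
  rw [colDot_eq]
  unfold strA
  simp only [sub_mul, Finset.sum_sub_distrib, ite_mul, one_mul, zero_mul,
    Finset.sum_ite_eq, mem_univ, if_true]
  ring

/-- **Identifiability of equal-variance linear Gaussian DAGs.** With
`b_j(θ) = θ²/2` and `c_j(t) = exp(−t²/2)/√(2π)` for all `j`, so that `exp L(x; β)` is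
the joint density of the linear SEM `X_j = β_{0j} + Σ_i β_{ij} X_i + ε_j`,
`ε_j ~ N(0,1)` independent: if `β, β̃ ∈ Ω` satisfy `exp L(x; β) = exp L(x; β̃)` for
every `x ∈ ℝ^p`, then `β` and `β̃` have the same DAG, i.e.
`β_{ij} ≠ 0 ↔ β̃_{ij} ≠ 0` for all `i, j ∈ {1,…,p}`. -/
theorem gaussian_gldag_identifiability
    (p : ℕ) (hp : 1 ≤ p)
    (β βt : Matrix (Fin (p + 1)) (Fin p) ℝ)
    (hβ : β ∈ Omega p) (hβt : βt ∈ Omega p)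
    (heq : ∀ x : Fin p → ℝ,
      Real.exp (logDensity (fun _ => gaussB) (fun _ => gaussC) β x)
        = Real.exp (logDensity (fun _ => gaussB) (fun _ => gaussC) βt x)) :
    ∀ i j : Fin p, β i.succ j ≠ 0 ↔ βt i.succ j ≠ 0 := by
  -- exp is injective, so the log-densities agree
  have hL : ∀ x, logDensity (fun _ => gaussB) (fun _ => gaussC) β x
      = logDensity (fun _ => gaussB) (fun _ => gaussC) βt x :=
    fun x => Real.exp_injective (heq x)
  -- rewrite log-density in residual form
  have expand : ∀ (γ : Matrix (Fin (p + 1)) (Fin p) ℝ) (x : Fin p → ℝ),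
      logDensity (fun _ => gaussB) (fun _ => gaussC) γ x
        = (∑ j, (Real.log (gaussC (x j)) + (x j) ^ 2 / 2))
          - (1 / 2) * ∑ j, (x j - colDot γ j x) ^ 2 := by
    intro γ x
    unfold logDensity gaussB
    rw [Finset.mul_sum, ← Finset.sum_sub_distrib]
    exact Finset.sum_congr rfl (fun j _ => by ring)
  have key0 : ∀ x, ∑ j, (x j - colDot β j x) ^ 2 = ∑ j, (x j - colDot βt j x) ^ 2 := by
    intro x
    have h := hL x
    rw [expand β x, expand βt x] at h
    linarith
  set A := strA β with hA
  set At := strA βt with hAt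
  have key : ∀ x : Fin p → ℝ,
      ∑ j, ((∑ l, A j l * x l) - β 0 j) ^ 2
        = ∑ j, ((∑ l, At j l * x l) - βt 0 j) ^ 2 := by
    intro x
    have h := key0 x
    simp only [resid_eq] at h
    exact h
  -- polarization: Gram matrices agree
  have hgram : ∀ i j, ∑ l, A l i * A l j = ∑ l, At l i * At l j := by
    intro k l
    have sInd : ∀ (C : Matrix (Fin p) (Fin p) ℝ) (j t : Fin p),
        ∑ s, C j s * (if s = t then (1:ℝ) else 0) = C j t := by
      intro C j t
      simp [mul_ite]
    have sPair : ∀ (C : Matrix (Fin p) (Fin p) ℝ) (j : Fin p),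
        ∑ s, C j s * ((if s = k then (1:ℝ) else 0) + (if s = l then 1 else 0))
          = C j k + C j l := by
      intro C j
      simp only [mul_add, Finset.sum_add_distrib, sInd]
    have E1 := key (fun s => (if s = k then (1:ℝ) else 0) + (if s = l then 1 else 0))
    have E2 := key (fun s => if s = k then (1:ℝ) else 0)
    have E3 := key (fun s => if s = l then (1:ℝ) else 0)
    have E4 := key (fun _ => (0:ℝ))
    simp only [sPair] at E1
    simp only [sInd] at E2 E3
    simp only [mul_zero, Finset.sum_const_zero, zero_sub] at E4
    have comb : ∀ (C : Matrix (Fin p) (Fin p) ℝ) (c : Fin p → ℝ),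
        (∑ j, (C j k + C j l - c j) ^ 2) - (∑ j, (C j k - c j) ^ 2)
          - (∑ j, (C j l - c j) ^ 2) + (∑ j, (-c j) ^ 2)
          = 2 * ∑ j, C j k * C j l := by
      intro C c
      rw [Finset.mul_sum, ← Finset.sum_sub_distrib, ← Finset.sum_sub_distrib,
        ← Finset.sum_add_distrib]
      exact Finset.sum_congr rfl (fun j _ => by ring)
    have c1 := comb A (fun j => β 0 j)
    have c2 := comb At (fun j => βt 0 j)
    -- columns of Gram vs rows: note key gives ∑_j over rows; we need ∑_l A l i * A l j
    linarith
  -- triangularity data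
  obtain ⟨σ, hσ⟩ := Set.mem_iUnion.mp hβ
  obtain ⟨τ, hτ⟩ := Set.mem_iUnion.mp hβt
  have hdiagA : ∀ j, A j j = 1 := by
    intro j
    have : β j.succ j = 0 := hσ j j (by simp [prec])
    simp [hA, strA, this]
  have hdiagAt : ∀ j, At j j = 1 := by
    intro j
    have : βt j.succ j = 0 := hτ j j (by simp [prec])
    simp [hAt, strA, this]
  have htriA : ∀ i j, A i j ≠ 0 → i = j ∨ (σ.symm j : ℕ) < (σ.symm i : ℕ) := by
    intro i j h
    by_cases hij : i = j
    · exact Or.inl hij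
    · right
      have hne : β j.succ i ≠ 0 := by
        intro h0
        apply h
        simp [hA, strA, hij, h0]
      have : prec σ j i := by
        by_contra hc
        exact hne (hσ j i hc)
      exact this
  have htriAt : ∀ i j, At i j ≠ 0 → i = j ∨ (τ.symm j : ℕ) < (τ.symm i : ℕ) := by
    intro i j h
    by_cases hij : i = j
    · exact Or.inl hij
    · right
      have hne : βt j.succ i ≠ 0 := by
        intro h0
        apply h
        simp [hAt, strA, hij, h0]
      have : prec τ j i := by
        by_contra hc
        exact hne (hτ j i hc)
      exact this
  have hAB : A = At :=
    gram_unique_aux (Fintype.card (Fin p)) (Fin p) le_rfl A At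
      (fun i => (σ.symm i : ℕ)) (fun i => (τ.symm i : ℕ))
      hdiagA hdiagAt htriA htriAt hgram
  intro i j
  have hb : β i.succ j = βt i.succ j := by
    have h1 : A j i = At j i := by rw [hAB]
    simp only [hA, hAt, strA] at h1
    linarith [h1]
  rw [hb]

end MainAux
end
end

section
/- (Deterministic contraction of the DANE-type local update.) Let H be a finite-dimensional real inner product space, D ⊆ H a closed linear subspace with orthogonal projection P_D, and let g, g_1, …, g_K : H → ℝ be twice continuously differentiable and convex, and ρ : H → ℝ convex. Let β̂ be a minimizer of F := g + ρ over D. Let μ > δ > 0 and suppose that for every ξ ∈ D: (i) ⟨u, ∇²g(ξ) u⟩ ≥ μ‖u‖² for all u ∈ D, and (ii) ‖P_D (∇²g_k(ξ) − ∇²g(ξ)) P_D‖_op ≤ δ for every k. For β ∈ D and k ∈ {1,…,K}, let φ_k(β) be a minimizer over D of ξ ↦ g_k(ξ) + ρ(ξ) − ⟨∇g_k(β) − ∇g(β), ξ⟩ (assumed to exist). Then ‖φ_k(β) − β̂‖ ≤ (δ/(μ − δ)) ‖β − β̂‖ for every β ∈ D and every k; consequently, for any weights w_k ≥ 0 with Σ_k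 w_k = 1, the averaged update Φ(β) = Σ_k w_k φ_k(β) satisfies ‖Φ(β) − β̂‖ ≤ (δ/(μ − δ)) ‖β − β̂‖ for every β ∈ D. -/
/-!
Deterministic contraction of the DANE-type local update.
-/

noncomputable section
open Finset


lemma aux_deriv_ge {H : Type*} [NormedAddCommGroup H] [NormedSpace ℝ H]
    {f : H → ℝ} {x v : H} (hf : DifferentiableAt ℝ f x) {c : ℝ}
    (h : ∀ t : ℝ, t ∈ Set.Ioc (0:ℝ) 1 → c * t ≤ f (x + t • v) - f x) :
    c ≤ fderiv ℝ f x v := by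
  have hline : HasDerivAt (fun t : ℝ => x + t • v) v 0 := by
    simpa using ((hasDerivAt_id (0:ℝ)).smul_const v).const_add x
  have hq : HasDerivAt (fun t : ℝ => f (x + t • v)) (fderiv ℝ f x v) 0 := by
    have h0 : HasFDerivAt f (fderiv ℝ f x) ((fun t : ℝ => x + t • v) 0) := by
      simpa using hf.hasFDerivAt
    exact h0.comp_hasDerivAt (f := fun t : ℝ => x + t • v) 0 hline
  have htend : Filter.Tendsto (slope (fun t : ℝ => f (x + t • v)) 0)
      (nhdsWithin 0 (Set.Ioi 0)) (nhds (fderiv ℝ f x v)) :=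
    (hasDerivAt_iff_tendsto_slope.mp hq).mono_left
      (nhdsWithin_mono _ (fun t ht => ne_of_gt ht))
  refine ge_of_tendsto htend ?_
  filter_upwards [Ioc_mem_nhdsGT_of_mem (Set.mem_Ico.mpr ⟨le_refl (0:ℝ), one_pos⟩)] with t ht
  have ht0 : 0 < t := ht.1
  have hs : slope (fun t : ℝ => f (x + t • v)) 0 t = (f (x + t • v) - f x) / t := by
    simp [slope_def_field]
  rw [hs, le_div_iff₀ ht0]
  exact h t ht

lemma aux_mvt {H : Type*} [NormedAddCommGroup H] [NormedSpace ℝ H]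
    {f : H → ℝ} {w : H} (hfw : Differentiable ℝ (fun y => fderiv ℝ f y w)) (x u : H) :
    ∃ t ∈ Set.Ioo (0:ℝ) 1,
      fderiv ℝ f (x + u) w - fderiv ℝ f x w
        = fderiv ℝ (fun y => fderiv ℝ f y w) (x + t • u) u := by
  set h : H → ℝ := fun y => fderiv ℝ f y w with hh
  have hline : ∀ t : ℝ, HasDerivAt (fun s : ℝ => x + s • u) u t := fun t => by
    simpa using ((hasDerivAt_id t).smul_const u).const_add x
  have hψ : ∀ t : ℝ, HasDerivAt (fun s : ℝ => h (x + s • u))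
      (fderiv ℝ h (x + t • u) u) t := fun t =>
    ((hfw (x + t • u)).hasFDerivAt).comp_hasDerivAt (f := fun s : ℝ => x + s • u) t (hline t)
  obtain ⟨t, ht, heq⟩ := exists_hasDerivAt_eq_slope (fun s : ℝ => h (x + s • u))
      (fun t => fderiv ℝ h (x + t • u) u) one_pos
      (fun t _ => (hψ t).continuousAt.continuousWithinAt)
      (fun t _ => hψ t)
  refine ⟨t, ht, ?_⟩
  rw [heq]
  simp [h]

lemma aux_diff_fderiv {H : Type*} [NormedAddCommGroup H] [NormedSpace ℝ H]
    {f : H → ℝ} (hf : ContDiff ℝ 2 f) (w : H) :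
    Differentiable ℝ (fun y => fderiv ℝ f y w) := by
  have h1 : ContDiff ℝ 1 (fderiv ℝ f) := hf.fderiv_right (by norm_num)
  exact (ContinuousLinearMap.apply ℝ ℝ w).differentiable.comp (h1.differentiable (by norm_num))


set_option maxHeartbeats 1600000 in
/-- **Deterministic contraction of the DANE-type local update.**
`H` a finite-dimensional real inner product space, `D ⊆ H` a (closed) linear subspace,
`g, g_1, …, g_K : H → ℝ` twice continuously differentiable and convex, `ρ` convex, and
`β̂` a minimizer of `F = g + ρ` over `D`. Let `μ > δ > 0`, and suppose for every
`ξ ∈ D`: (i) `⟨u, ∇²g(ξ)u⟩ ≥ μ‖u‖²` for all `u ∈ D`, and (ii) the restriction to `D`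
of `∇²g_k(ξ) − ∇²g(ξ)` has operator norm at most `δ`, i.e.
`|⟨u, (∇²g_k(ξ) − ∇²g(ξ)) v⟩| ≤ δ‖u‖‖v‖` for all `u, v ∈ D` and all `k`
(here the Hessian bilinear form is `(u,v) ↦ fderiv ℝ (fun y => fderiv ℝ g y v) ξ u`).
If `φ_k(β)` minimizes `ξ ↦ g_k(ξ) + ρ(ξ) − ⟨∇g_k(β) − ∇g(β), ξ⟩` over `D`, then
`‖φ_k(β) − β̂‖ ≤ (δ/(μ−δ))‖β − β̂‖` for all `β ∈ D` and all `k`, and the same bound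
holds for any convex combination `Φ(β) = Σ_k w_k φ_k(β)`. -/
theorem dane_contraction
    {H : Type*} [NormedAddCommGroup H] [InnerProductSpace ℝ H] [FiniteDimensional ℝ H]
    (D : Submodule ℝ H)
    (K : ℕ) (g : H → ℝ) (gk : Fin K → H → ℝ)
    (hg : ContDiff ℝ 2 g) (hgk : ∀ k, ContDiff ℝ 2 (gk k))
    (hgconv : ConvexOn ℝ Set.univ g) (hgkconv : ∀ k, ConvexOn ℝ Set.univ (gk k))
    (ρ : H → ℝ) (hρ : ConvexOn ℝ Set.univ ρ)
    (βhat : H) (hβhatD : βhat ∈ D)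
    (hβhatMin : ∀ ξ ∈ D, g βhat + ρ βhat ≤ g ξ + ρ ξ)
    (μ δ : ℝ) (hδ : 0 < δ) (hμδ : δ < μ)
    (hSC : ∀ ξ ∈ D, ∀ u ∈ D, μ * ‖u‖ ^ 2 ≤ fderiv ℝ (fun y => fderiv ℝ g y u) ξ u)
    (hHessClose : ∀ k, ∀ ξ ∈ D, ∀ u ∈ D, ∀ v ∈ D,
      |fderiv ℝ (fun y => fderiv ℝ (gk k) y v) ξ u
          - fderiv ℝ (fun y => fderiv ℝ g y v) ξ u|
        ≤ δ * ‖u‖ * ‖v‖)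
    (φ : Fin K → H → H)
    (hφD : ∀ k, ∀ β ∈ D, φ k β ∈ D)
    (hφmin : ∀ k, ∀ β ∈ D, ∀ ξ ∈ D,
      gk k (φ k β) + ρ (φ k β)
          - (fderiv ℝ (gk k) β (φ k β) - fderiv ℝ g β (φ k β))
        ≤ gk k ξ + ρ ξ - (fderiv ℝ (gk k) β ξ - fderiv ℝ g β ξ)) :
    (∀ k, ∀ β ∈ D, ‖φ k β - βhat‖ ≤ (δ / (μ - δ)) * ‖β - βhat‖)
    ∧ (∀ w : Fin K → ℝ, (∀ k, 0 ≤ w k) → (∑ k, w k) = 1 →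
        ∀ β ∈ D, ‖(∑ k, w k • φ k β) - βhat‖ ≤ (δ / (μ - δ)) * ‖β - βhat‖) := by
  have hμδ0 : (0:ℝ) < μ - δ := by linarith
  have hgd : Differentiable ℝ g := hg.differentiable (by norm_num)
  have hgkd : ∀ k, Differentiable ℝ (gk k) := fun k => (hgk k).differentiable (by norm_num)
  have main : ∀ k, ∀ β ∈ D, ‖φ k β - βhat‖ ≤ (δ / (μ - δ)) * ‖β - βhat‖ := by
    intro k β hβ
    set φk := φ k β with hφk
    have hφkD : φk ∈ D := hφD k β hβ
    set w : H := φk - βhat with hw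
    have hwD : w ∈ D := D.sub_mem hφkD hβhatD
    -- the continuous linear correction
    set L : H →L[ℝ] ℝ := fderiv ℝ (gk k) β - fderiv ℝ g β with hL
    set s : H → ℝ := fun ξ => gk k ξ - L ξ with hs
    have hsdiff : DifferentiableAt ℝ s φk :=
      ((hgkd k) φk).sub L.differentiableAt
    -- first-order condition at φk
    have hfo1 : ρ φk - ρ βhat ≤ fderiv ℝ s φk (βhat - φk) := by
      refine aux_deriv_ge hsdiff ?_
      intro t ht
      set p := φk + t • (βhat - φk) with hp
      have hpD : p ∈ D := D.add_mem hφkD (D.smul_mem _ (D.sub_mem hβhatD hφkD))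
      have hpcomb : p = (1 - t) • φk + t • βhat := by
        simp [hp, smul_sub, sub_smul]; abel
      have hρp : ρ p ≤ (1 - t) * ρ φk + t * ρ βhat := by
        rw [hpcomb]
        exact hρ.2 (Set.mem_univ _) (Set.mem_univ _) (by linarith [ht.2]) ht.1.le (by ring)
      have hmin := hφmin k β hβ p hpD
      have hLp : L p = fderiv ℝ (gk k) β p - fderiv ℝ g β p := by
        simp [hL]
      have hLφ : L φk = fderiv ℝ (gk k) β φk - fderiv ℝ g β φk := by
        simp [hL]
      have : s p - s φk ≥ ρ φk - ρ p := by
        simp only [hs]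
        rw [hLp, hLφ]
        linarith [hmin]
      nlinarith [this, hρp]
    -- first-order condition at βhat
    have hfo2 : ρ βhat - ρ φk ≤ fderiv ℝ g βhat w := by
      refine aux_deriv_ge (hgd βhat) ?_
      intro t ht
      set p := βhat + t • w with hp
      have hpD : p ∈ D := D.add_mem hβhatD (D.smul_mem _ hwD)
      have hpcomb : p = (1 - t) • βhat + t • φk := by
        simp [hp, hw, smul_sub, sub_smul]; abel
      have hρp : ρ p ≤ (1 - t) * ρ βhat + t * ρ φk := by
        rw [hpcomb]
        exact hρ.2 (Set.mem_univ _) (Set.mem_univ _) (by linarith [ht.2]) ht.1.le (by ring)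
      have hmin := hβhatMin p hpD
      nlinarith [hmin, hρp]
    -- rewrite fderiv of s
    have hsder : fderiv ℝ s φk (βhat - φk)
        = fderiv ℝ (gk k) φk (βhat - φk)
          - (fderiv ℝ (gk k) β (βhat - φk) - fderiv ℝ g β (βhat - φk)) := by
      have h1 : fderiv ℝ s φk = fderiv ℝ (gk k) φk - L := by
        rw [hs, fderiv_fun_sub ((hgkd k) φk) L.differentiableAt,
          L.fderiv]
      rw [h1]
      simp [hL]
    -- strong convexity term
    have hSCterm : μ * ‖w‖ ^ 2 ≤ fderiv ℝ g φk w - fderiv ℝ g βhat w := by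
      obtain ⟨t, htIoo, hteq⟩ := aux_mvt (aux_diff_fderiv hg w) βhat w
      have hxw : βhat + w = φk := by simp [hw]
      rw [hxw] at hteq
      rw [hteq]
      exact hSC _ (D.add_mem hβhatD (D.smul_mem _ hwD)) w hwD
    -- cross term via Hessian closeness
    have hE : |(fderiv ℝ (gk k) φk w - fderiv ℝ g φk w)
        - (fderiv ℝ (gk k) β w - fderiv ℝ g β w)| ≤ δ * ‖φk - β‖ * ‖w‖ := by
      set r : H → ℝ := fun z => gk k z - g z with hr
      have hrw : (fun y => fderiv ℝ r y w)
          = fun y => fderiv ℝ (gk k) y w - fderiv ℝ g y w := by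
        funext y
        rw [hr, fderiv_fun_sub ((hgkd k) y) (hgd y)]
        rfl
      have hrdiff : Differentiable ℝ (fun y => fderiv ℝ r y w) := by
        rw [hrw]
        exact (aux_diff_fderiv (hgk k) w).sub (aux_diff_fderiv hg w)
      obtain ⟨t, htIoo, hteq⟩ := aux_mvt hrdiff β (φk - β)
      have hxw : β + (φk - β) = φk := by abel
      rw [hxw] at hteq
      have hlhs : fderiv ℝ r φk w - fderiv ℝ r β w
          = (fderiv ℝ (gk k) φk w - fderiv ℝ g φk w)
            - (fderiv ℝ (gk k) β w - fderiv ℝ g β w) := by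
        have e1 := congrFun hrw φk
        have e2 := congrFun hrw β
        rw [e1, e2]
      have hrhs : fderiv ℝ (fun y => fderiv ℝ r y w) (β + t • (φk - β)) (φk - β)
          = fderiv ℝ (fun y => fderiv ℝ (gk k) y w) (β + t • (φk - β)) (φk - β)
            - fderiv ℝ (fun y => fderiv ℝ g y w) (β + t • (φk - β)) (φk - β) := by
        rw [hrw, fderiv_fun_sub ((aux_diff_fderiv (hgk k) w) _) ((aux_diff_fderiv hg w) _)]
        rfl
      rw [← hlhs, hteq, hrhs]
      exact hHessClose k _ (D.add_mem hβ (D.smul_mem _ (D.sub_mem hφkD hβ)))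
        (φk - β) (D.sub_mem hφkD hβ) w hwD
    -- combine
    have hneg : fderiv ℝ (gk k) φk (βhat - φk) = -(fderiv ℝ (gk k) φk w) := by
      have : βhat - φk = -w := by simp [hw]
      rw [this, map_neg]
    have hneg2 : fderiv ℝ (gk k) β (βhat - φk) = -(fderiv ℝ (gk k) β w) := by
      have : βhat - φk = -w := by simp [hw]
      rw [this, map_neg]
    have hneg3 : fderiv ℝ g β (βhat - φk) = -(fderiv ℝ g β w) := by
      have : βhat - φk = -w := by simp [hw]
      rw [this, map_neg]
    rw [hsder, hneg, hneg2, hneg3] at hfo1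
    have hsum : fderiv ℝ (gk k) φk w - fderiv ℝ (gk k) β w + fderiv ℝ g β w
        - fderiv ℝ g βhat w ≤ 0 := by linarith
    have habs := abs_le.mp hE
    have hkey : μ * ‖w‖ ^ 2 ≤ δ * ‖φk - β‖ * ‖w‖ := by linarith [habs.1, habs.2, hSCterm, hsum]
    have hnormtri : ‖φk - β‖ ≤ ‖w‖ + ‖β - βhat‖ := by
      have : φk - β = w - (β - βhat) := by rw [hw]; abel
      rw [this]
      exact norm_sub_le _ _
    have hkey2 : μ * ‖w‖ ^ 2 ≤ δ * (‖w‖ + ‖β - βhat‖) * ‖w‖ := by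
      refine hkey.trans ?_
      have := mul_le_mul_of_nonneg_right
        (mul_le_mul_of_nonneg_left hnormtri hδ.le) (norm_nonneg w)
      linarith
    rw [div_mul_eq_mul_div, le_div_iff₀ hμδ0]
    rcases eq_or_lt_of_le (norm_nonneg w) with h0 | h0
    · rw [← h0, zero_mul]
      positivity
    · have hstep : (‖w‖ * (μ - δ)) * ‖w‖ ≤ (δ * ‖β - βhat‖) * ‖w‖ := by nlinarith [hkey2]
      exact le_of_mul_le_mul_right hstep h0
  refine ⟨main, ?_⟩
  intro wts hwnn hwsum β hβ
  have hsplit : (∑ k, wts k • φ k β) - βhat = ∑ k, wts k • (φ k β - βhat) := by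
    simp only [smul_sub, Finset.sum_sub_distrib, ← Finset.sum_smul, hwsum, one_smul]
  rw [hsplit]
  calc ‖∑ k, wts k • (φ k β - βhat)‖ ≤ ∑ k, ‖wts k • (φ k β - βhat)‖ :=
        norm_sum_le _ _
    _ ≤ ∑ k, wts k * ((δ / (μ - δ)) * ‖β - βhat‖) := by
        refine Finset.sum_le_sum fun k _ => ?_
        rw [norm_smul, Real.norm_eq_abs, abs_of_nonneg (hwnn k)]
        exact mul_le_mul_of_nonneg_left (main k β hβ) (hwnn k)
    _ = (δ / (μ - δ)) * ‖β - βhat‖ := by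
        rw [← Finset.sum_mul, hwsum, one_mul]
end
end
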